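/- Define polynomials P_i(y) ∈ ℚ[y] by P_0(y) = y - 1 and P_{i+1}(y) = (y³ - y²) · P_i'(y). Then for every i ≥ 0, every nonzero monomial of P_i of positive degree has degree at least i+1, and the coefficient of y^{i+1} in P_i equals (-1)^i · i!. -/
import Mathlib


open Polynomial

/-- `P_0(y) = y - 1`, `P_{i+1}(y) = (y³ - y²) P_i'(y)`. -/
noncomputable def Ppoly : ℕ → Polynomial ℚ
  | 0 => Polynomial.X - 1
  | i + 1 => (Polynomial.X ^ 3 - Polynomial.X ^ 2) * (Ppoly i).derivative

lemma Ppoly_succ_coeff (i k : ℕ) :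
    (Ppoly (i + 1)).coeff k =
      (if 3 ≤ k then (Ppoly i).derivative.coeff (k - 3) else 0) -
      (if 2 ≤ k then (Ppoly i).derivative.coeff (k - 2) else 0) := by
  show ((X ^ 3 - X ^ 2) * (Ppoly i).derivative).coeff k = _
  rw [sub_mul, mul_comm, mul_comm (X ^ 2), coeff_sub, coeff_mul_X_pow', coeff_mul_X_pow']

theorem Ppoly_lowest_terms (i : ℕ) :
    (∀ k : ℕ, 0 < k → k < i + 1 → (Ppoly i).coeff k = 0) ∧
      (Ppoly i).coeff (i + 1) = (-1 : ℚ) ^ i * i.factorial := by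
  induction i with
  | zero =>
    constructor
    · intro k hk hk'; omega
    · simp [Ppoly, coeff_one]
  | succ i ih =>
    obtain ⟨ih1, ih2⟩ := ih
    have hd : ∀ n : ℕ, (Ppoly i).derivative.coeff n = (Ppoly i).coeff (n + 1) * (n + 1) := by
      intro n; simp [coeff_derivative]
    constructor
    · intro k hk hk'
      rw [Ppoly_succ_coeff]
      have h1 : (if 3 ≤ k then (Ppoly i).derivative.coeff (k - 3) else 0) = 0 := by
        split_ifs with h
        · rw [hd]
          have hz : (Ppoly i).coeff (k - 3 + 1) = 0 := by
            rcases Nat.eq_or_lt_of_le h with h' | h'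
            · have : k - 3 + 1 = 1 := by omega
              rw [this]
              exact ih1 1 one_pos (by omega)
            · exact ih1 _ (by omega) (by omega)
          rw [hz, zero_mul]
        · rfl
      have h2 : (if 2 ≤ k then (Ppoly i).derivative.coeff (k - 2) else 0) = 0 := by
        split_ifs with h
        · rw [hd]
          have hz : (Ppoly i).coeff (k - 2 + 1) = 0 := by
            exact ih1 _ (by omega) (by omega)
          rw [hz, zero_mul]
        · rfl
      rw [h1, h2, sub_zero]
    · rcases i with _ | j
      · show ((X ^ 3 - X ^ 2) * (Ppoly 0).derivative).coeff 2 = _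
        simp [Ppoly, Nat.factorial]
      · rw [Ppoly_succ_coeff, if_pos (by omega : 3 ≤ j + 1 + 1 + 1),
          if_pos (by omega : 2 ≤ j + 1 + 1 + 1), hd, hd]
        have e3 : j + 1 + 1 + 1 - 3 = j := by omega
        have e2 : j + 1 + 1 + 1 - 2 = j + 1 := by omega
        rw [e3, e2]
        have hz : (Ppoly (j + 1)).coeff (j + 1) = 0 := ih1 (j + 1) (by omega) (by omega)
        rw [hz, zero_mul, zero_sub, ih2, Nat.factorial_succ j]
        have hf : (j + 1 + 1).factorial = (j + 2) * ((j + 1) * j.factorial) := by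
          simp [Nat.factorial_succ]
        rw [hf]
        push_cast
        ring
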